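/- Let Ω be a bounded self-adjoint operator on H₁ ⊕ H₂ with block form [[Ω₁,Γ],[Γ†,Ω₂]], and suppose dim H₁ < ∞. Then the restriction Ωc of Ω to O_Ω(Ran Γ ⊕ Ran Γ†) has finite spectral multiplicity, bounded by 2·dim H₁. -/

import Mathlib

/-! The orbit of a set under `Ω` depends only on the linear span of the set. The span of
`Ran Γ ⊕ Ran Γ†` has dimension at most `2 dim H₁`, as `Ran Γ ⊆ H₁` and `Ran Γ†` is the image of
`H₁`; a basis of it, padded with zeros to `2 dim H₁` vectors, therefore generates the same orbit. -/

open ContinuousLinearMap MeasureTheory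

/-- The orbit of a set `S` under an operator `Ω`: the smallest closed `Ω`-invariant
subspace containing `S`. -/
noncomputable def orbit {H : Type*} [NormedAddCommGroup H] [InnerProductSpace ℂ H]
    (Ω : H →L[ℂ] H) (S : Set H) : Submodule ℂ H :=
  sInf {K : Submodule ℂ H | S ⊆ K ∧ IsClosed (K : Set H) ∧ ∀ x ∈ K, Ω x ∈ K}

variable {H₁ H₂ : Type*} [NormedAddCommGroup H₁] [InnerProductSpace ℂ H₁] [CompleteSpace H₁]
  [NormedAddCommGroup H₂] [InnerProductSpace ℂ H₂] [CompleteSpace H₂]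

/-- Inclusion of `H₁` into the Hilbert space direct sum `H₁ ⊕ H₂`. -/
noncomputable def inl' : H₁ →L[ℂ] WithLp 2 (H₁ × H₂) :=
  (WithLp.prodContinuousLinearEquiv 2 ℂ H₁ H₂).symm.toContinuousLinearMap ∘L
    ContinuousLinearMap.inl ℂ H₁ H₂

/-- Inclusion of `H₂` into the Hilbert space direct sum `H₁ ⊕ H₂`. -/
noncomputable def inr' : H₂ →L[ℂ] WithLp 2 (H₁ × H₂) :=
  (WithLp.prodContinuousLinearEquiv 2 ℂ H₁ H₂).symm.toContinuousLinearMap ∘L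
    ContinuousLinearMap.inr ℂ H₁ H₂

/-- The block operator `[[Ω₁, Γ], [Γ†, Ω₂]]` on `H₁ ⊕ H₂`. -/
noncomputable def blockOp (Ω₁ : H₁ →L[ℂ] H₁) (Ω₂ : H₂ →L[ℂ] H₂) (Γ : H₂ →L[ℂ] H₁) :
    WithLp 2 (H₁ × H₂) →L[ℂ] WithLp 2 (H₁ × H₂) :=
  (WithLp.prodContinuousLinearEquiv 2 ℂ H₁ H₂).symm.toContinuousLinearMap ∘L
    ((Ω₁ ∘L ContinuousLinearMap.fst ℂ H₁ H₂ + Γ ∘L ContinuousLinearMap.snd ℂ H₁ H₂).prod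
      ((ContinuousLinearMap.adjoint Γ) ∘L ContinuousLinearMap.fst ℂ H₁ H₂ +
        Ω₂ ∘L ContinuousLinearMap.snd ℂ H₁ H₂)) ∘L
    (WithLp.prodContinuousLinearEquiv 2 ℂ H₁ H₂).toContinuousLinearMap

/-- `H₁` as a subspace of `H₁ ⊕ H₂`. -/
noncomputable def sub1 : Submodule ℂ (WithLp 2 (H₁ × H₂)) := LinearMap.range ((inl' : H₁ →L[ℂ] WithLp 2 (H₁ × H₂)) : H₁ →ₗ[ℂ] WithLp 2 (H₁ × H₂))

/-- `H₂` as a subspace of `H₁ ⊕ H₂`. -/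
noncomputable def sub2 : Submodule ℂ (WithLp 2 (H₁ × H₂)) := LinearMap.range ((inr' : H₂ →L[ℂ] WithLp 2 (H₁ × H₂)) : H₂ →ₗ[ℂ] WithLp 2 (H₁ × H₂))

section Orbit

variable {H : Type*} [NormedAddCommGroup H] [InnerProductSpace ℂ H] (Ω : H →L[ℂ] H)

lemma subset_orbit (S : Set H) : S ⊆ orbit Ω S :=
  fun _ hx => Submodule.mem_sInf.mpr fun _ hK => hK.1 hx

lemma isClosed_orbit (S : Set H) : IsClosed (orbit Ω S : Set H) := by
  rw [orbit, Submodule.coe_sInf]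
  exact isClosed_biInter fun _ hK => hK.2.1

lemma apply_mem_orbit {S : Set H} {x : H} (hx : x ∈ orbit Ω S) : Ω x ∈ orbit Ω S :=
  Submodule.mem_sInf.mpr fun K hK => hK.2.2 x (Submodule.mem_sInf.mp hx K hK)

lemma orbit_le {S : Set H} {K : Submodule ℂ H} (hS : S ⊆ K) (hK : IsClosed (K : Set H))
    (hΩK : ∀ x ∈ K, Ω x ∈ K) : orbit Ω S ≤ K :=
  sInf_le ⟨hS, hK, hΩK⟩

lemma span_le_orbit (S : Set H) : Submodule.span ℂ S ≤ orbit Ω S :=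
  Submodule.span_le.mpr (subset_orbit Ω S)

lemma orbit_le_orbit_of_subset_span {S T : Set H} (h : S ⊆ Submodule.span ℂ T) :
    orbit Ω S ≤ orbit Ω T :=
  orbit_le Ω (h.trans (span_le_orbit Ω T)) (isClosed_orbit Ω T) fun _ => apply_mem_orbit Ω

lemma orbit_eq_of_span_eq {S T : Set H} (h : Submodule.span ℂ S = Submodule.span ℂ T) :
    orbit Ω S = orbit Ω T :=
  le_antisymm (orbit_le_orbit_of_subset_span Ω (h ▸ Submodule.subset_span))
    (orbit_le_orbit_of_subset_span Ω (h ▸ Submodule.subset_span))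

end Orbit

lemma Submodule.exists_fin_span_range_eq_of_finrank_le {K E : Type*} [DivisionRing K]
    [AddCommGroup E] [Module K E] (V : Submodule K E) [FiniteDimensional K V] {n : ℕ}
    (hn : Module.finrank K V ≤ n) : ∃ v : Fin n → E, Submodule.span K (Set.range v) = V := by
  set b := Module.finBasis K V
  refine ⟨fun i => if hi : (i : ℕ) < Module.finrank K V then (b ⟨i, hi⟩ : E) else 0,
    le_antisymm ?_ ?_⟩
  · rw [Submodule.span_le]
    rintro _ ⟨i, rfl⟩
    dsimp only
    split_ifs
    exacts [(b _).2, V.zero_mem]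
  · calc V = (Submodule.span K (Set.range b)).map V.subtype := by
          rw [b.span_eq, Submodule.map_top, Submodule.range_subtype]
      _ = Submodule.span K (V.subtype '' Set.range b) := Submodule.map_span _ _
      _ ≤ _ := by
          refine Submodule.span_mono ?_
          rintro _ ⟨_, ⟨j, rfl⟩, rfl⟩
          exact ⟨⟨j, j.2.trans_le hn⟩, by simp [j.2]⟩

lemma ContinuousLinearMap.span_image_range {R E F G : Type*} [Semiring R]
    [TopologicalSpace E] [AddCommMonoid E] [Module R E]
    [TopologicalSpace F] [AddCommMonoid F] [Module R F]
    [TopologicalSpace G] [AddCommMonoid G] [Module R G] (f : F →L[R] G) (g : E →L[R] F) :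
    Submodule.span R (f '' Set.range g) = g.toLinearMap.range.map f.toLinearMap := by
  rw [← (g.toLinearMap.range.map f.toLinearMap).span_eq, Submodule.map_coe, LinearMap.coe_range]
  rfl

theorem multiplicity_le_of_finiteDimensional_general [FiniteDimensional ℂ H₁]
    (Γ : H₂ →L[ℂ] H₁)
    (Ω : WithLp 2 (H₁ × H₂) →L[ℂ] WithLp 2 (H₁ × H₂))
    (Hc : Submodule ℂ (WithLp 2 (H₁ × H₂)))
    (hHc : Hc = orbit Ω
      (inl' '' Set.range Γ ∪ inr' '' Set.range (ContinuousLinearMap.adjoint Γ))) :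
    ∃ v : Fin (2 * Module.finrank ℂ H₁) → WithLp 2 (H₁ × H₂),
      (∀ i, v i ∈ Hc) ∧ orbit Ω (Set.range v) = Hc := by
  set S := inl' '' Set.range Γ ∪ inr' '' Set.range (ContinuousLinearMap.adjoint Γ)
  have hspan : Submodule.span ℂ S =
      Γ.toLinearMap.range.map (inl' : H₁ →L[ℂ] WithLp 2 (H₁ × H₂)).toLinearMap ⊔
        (ContinuousLinearMap.adjoint Γ).toLinearMap.range.map
          (inr' : H₂ →L[ℂ] WithLp 2 (H₁ × H₂)).toLinearMap := by
    rw [Submodule.span_union, ContinuousLinearMap.span_image_range,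
      ContinuousLinearMap.span_image_range]
  have : FiniteDimensional ℂ (Submodule.span ℂ S) := hspan ▸ inferInstance
  have hrank : Module.finrank ℂ (Submodule.span ℂ S) ≤ 2 * Module.finrank ℂ H₁ := by
    rw [hspan, two_mul]
    refine (Submodule.finrank_add_le_finrank_add_finrank _ _).trans (add_le_add ?_ ?_)
    · exact (Submodule.finrank_map_le _ _).trans (Submodule.finrank_le _)
    · exact (Submodule.finrank_map_le _ _).trans (LinearMap.finrank_range_le _)
  obtain ⟨v, hv⟩ := (Submodule.span ℂ S).exists_fin_span_range_eq_of_finrank_le hrank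
  subst hHc
  exact ⟨v, fun i => span_le_orbit Ω S (hv ▸ Submodule.subset_span ⟨i, rfl⟩),
    orbit_eq_of_span_eq Ω hv⟩

/-- if `H₁` is finite dimensional, the restriction of `Ω` to
`O_Ω(Ran Γ ⊕ Ran Γ†)` has spectral multiplicity at most `2 dim H₁`: that subspace is
generated under `Ω` by at most `2 dim H₁` vectors. -/
theorem multiplicity_le_of_finiteDimensional [FiniteDimensional ℂ H₁]
    (Ω₁ : H₁ →L[ℂ] H₁) (Ω₂ : H₂ →L[ℂ] H₂) (Γ : H₂ →L[ℂ] H₁)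
    (hΩ₁ : IsSelfAdjoint Ω₁) (hΩ₂ : IsSelfAdjoint Ω₂)
    (Ω : WithLp 2 (H₁ × H₂) →L[ℂ] WithLp 2 (H₁ × H₂)) (hΩ : Ω = blockOp Ω₁ Ω₂ Γ)
    (Hc : Submodule ℂ (WithLp 2 (H₁ × H₂)))
    (hHc : Hc = orbit Ω
      (inl' '' Set.range Γ ∪ inr' '' Set.range (ContinuousLinearMap.adjoint Γ))) :
    ∃ v : Fin (2 * Module.finrank ℂ H₁) → WithLp 2 (H₁ × H₂),
      (∀ i, v i ∈ Hc) ∧ orbit Ω (Set.range v) = Hc :=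
  multiplicity_le_of_finiteDimensional_general Γ Ω Hc hHc
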